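/- arXiv:2308.14653 — 3 statements merged into one kernel-verified Lean document; each statement's English description precedes it below -/
import Mathlib

section
/- If a nonassociative F-algebra A is quasi-associative with respect to some simple subalgebra B of its nucleus (with separable center), then the center of A is exactly F. -/
open scoped TensorProduct

/-- The nucleus of a (possibly nonassociative) algebra. -/
def nucleus (A : Type*) [Mul A] : Set A :=
  {x | (∀ y z : A, x * y * z = x * (y * z)) ∧ (∀ y z : A, y * x * z = y * (x * z)) ∧
       (∀ y z : A, y * z * x = y * (z * x))}

/-- The action of `K ⊗ K` on `A` by left and right multiplication through `j : K →ₗ A`: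
`(k ⊗ k') • a = (j k) a (j k')`. -/
noncomputable def biAct {F K A : Type*} [Field F] [Ring K] [Algebra F K]
    [NonUnitalNonAssocRing A] [Module F A] [SMulCommClass F A A] [IsScalarTower F A A]
    (j : K →ₗ[F] A) : K ⊗[F] K →ₗ[F] A →ₗ[F] A :=
  TensorProduct.lift <| LinearMap.mk₂ F
    (fun k k' => (LinearMap.mulRight F (j k')).comp (LinearMap.mulLeft F (j k)))
    (fun k₁ k₂ k' => by ext a; simp [add_mul])
    (fun s k k' => by ext a; simp [smul_mul_assoc])
    (fun k k₁' k₂' => by ext a; simp [mul_add])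
    (fun s k k' => by ext a; simp [mul_smul_comm])

lemma biAct_tmul {F K A : Type*} [Field F] [Ring K] [Algebra F K]
    [NonUnitalNonAssocRing A] [Module F A] [SMulCommClass F A A] [IsScalarTower F A A]
    (j : K →ₗ[F] A) (k k' : K) (a : A) :
    biAct j (k ⊗ₜ[F] k') a = j k * a * j k' := by
  simp [biAct]

lemma tmul_one_eq_one_tmul_aux {F B : Type*} [Field F] [Ring B] [Nontrivial B] [Algebra F B]
    (b : B) (h : b ⊗ₜ[F] (1 : B) = (1 : B) ⊗ₜ[F] b) : ∃ s : F, b = s • (1 : B) := by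
  have hb : b ∈ Submodule.span F ({(1 : B)} : Set B) := by
    by_contra hc
    set S := Submodule.span F ({(1 : B)} : Set B)
    have hq : S.mkQ b ≠ 0 := by
      simpa [Submodule.Quotient.mk_eq_zero] using hc
    obtain ⟨g, hg⟩ : ∃ g : Module.Dual F (B ⧸ S), g (S.mkQ b) ≠ 0 := by
      by_contra hg
      push_neg at hg
      exact hq ((Module.forall_dual_apply_eq_zero_iff F _).mp hg)
    have := congrArg (fun t => (TensorProduct.lid F B)
      (TensorProduct.map (g ∘ₗ S.mkQ) LinearMap.id t)) h
    simp only [TensorProduct.map_tmul, LinearMap.id_coe, id_eq, TensorProduct.lid_tmul,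
      LinearMap.comp_apply] at this
    have h1 : S.mkQ (1 : B) = 0 := by
      simp only [Submodule.mkQ_apply, Submodule.Quotient.mk_eq_zero]
      exact Submodule.mem_span_singleton_self 1
    rw [h1] at this
    simp only [map_zero, zero_smul] at this
    rcases smul_eq_zero.mp this with h' | h'
    · exact hg h'
    · exact one_ne_zero h'
  obtain ⟨s, hs⟩ := Submodule.mem_span_singleton.mp hb
  exact ⟨s, hs.symm⟩

/-- If a nonassociative `F`-algebra `A` is quasi-associative with respect to some simple
subalgebra `B` of its nucleus with separable center, then the center of `A` is exactly
`F`. -/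
theorem stmt_6 {F A B : Type*} [Field F]
    [NonAssocRing A] [Module F A] [SMulCommClass F A A] [IsScalarTower F A A]
    [FiniteDimensional F A]
    [Ring B] [Algebra F B] [FiniteDimensional F B] [IsSimpleRing B]
    [Algebra.IsSeparable F (Subalgebra.center F B)]
    (j : B →ₗ[F] A) (hj_inj : Function.Injective j)
    (hj_mul : ∀ b b' : B, j (b * b') = j b * j b') (hj_one : j 1 = 1)
    (hj_nuc : ∀ b : B, j b ∈ nucleus A)
    (hinj : ∀ x : B ⊗[F] B, (∀ a : A, biAct j x a = 0) → x = 0)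
    (hsurj : ∀ f : A →ₗ[F] A,
      (∀ b ∈ Subalgebra.center F B, ∀ a : A, f (j b * a) = j b * f a ∧
        f (a * j b) = f a * j b) →
      ∃ x : B ⊗[F] B, ∀ a : A, biAct j x a = f a) :
    {x : A | x ∈ nucleus A ∧ ∀ a : A, x * a = a * x} =
      Set.range (fun s : F => s • (1 : A)) := by
  ext x
  simp only [Set.mem_setOf_eq, Set.mem_range]
  constructor
  · rintro ⟨⟨hn1, hn2, hn3⟩, hc⟩
    -- left multiplication by x
    obtain ⟨t, ht⟩ := hsurj (LinearMap.mulLeft F x) (by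
      intro b _ a
      constructor
      · show x * (j b * a) = j b * (x * a)
        rw [← hn1 (j b) a, hc (j b), (hj_nuc b).1 x a]
      · show x * (a * j b) = x * a * j b
        rw [← hn1 a (j b)])
    -- x = j b₀ where b₀ = mul' t
    have hx : x = j (LinearMap.mul' F B t) := by
      have h1 : biAct j t 1 = x := by simp [ht 1]
      rw [← h1]
      clear h1 ht
      induction t using TensorProduct.induction_on with
      | zero => simp
      | tmul b b' => rw [biAct_tmul]; simp [hj_mul]
      | add u v hu hv => simp [map_add, hu, hv]
    set b₀ := LinearMap.mul' F B t with hb₀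
    have hu : (b₀ ⊗ₜ[F] (1 : B) - (1 : B) ⊗ₜ[F] b₀ : B ⊗[F] B) = 0 := by
      apply hinj
      intro a
      rw [map_sub, LinearMap.sub_apply, biAct_tmul, biAct_tmul, hj_one, mul_one, one_mul]
      rw [← hx]
      rw [hc a]
      exact sub_self _
    have : b₀ ⊗ₜ[F] (1 : B) = (1 : B) ⊗ₜ[F] b₀ := by
      have := sub_eq_zero.mp hu; exact this
    obtain ⟨s, hs⟩ := tmul_one_eq_one_tmul_aux b₀ this
    refine ⟨s, ?_⟩
    rw [hx, hs, map_smul, hj_one]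
  · rintro ⟨s, rfl⟩
    refine ⟨⟨?_, ?_, ?_⟩, ?_⟩ <;> intro y <;>
      try intro z
    all_goals simp [smul_mul_assoc, mul_smul_comm]
end

section
/- The tensor product of skew matrix algebras M_n(F;c) and M_{n'}(F;c') is isomorphic to the skew matrix algebra M_{nn'}(F; c⊗c'), where (c⊗c')_{(i,i'),(j,j'),(k,k')} = c_{ijk} c'_{i'j'k'}. -/
open scoped BigOperators TensorProduct
open TensorProduct

def stdE' (F : Type*) [Field F] {n : ℕ} (i j : Fin n) : Fin n → Fin n → F :=
  fun a b => if a = i ∧ b = j then 1 else 0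

lemma stdE'_expand {F : Type*} [Field F] {n : ℕ} (x : Fin n → Fin n → F) :
    ∑ i : Fin n, ∑ j : Fin n, x i j • stdE' F i j = x := by
  funext a b
  simp [stdE', ite_and, Finset.sum_apply, smul_eq_mul, mul_ite, Finset.sum_ite_eq]

noncomputable def kronF (F : Type*) [Field F] (n n' : ℕ) :
    ((Fin n → Fin n → F) ⊗[F] (Fin n' → Fin n' → F)) →ₗ[F]
      (Fin n × Fin n' → Fin n × Fin n' → F) :=
  TensorProduct.lift
    { toFun := fun x =>
        { toFun := fun y => fun p q => x p.1 q.1 * y p.2 q.2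
          map_add' := by intros; funext p q; simp [mul_add]
          map_smul' := by intros; funext p q; simp [smul_eq_mul]; ring }
      map_add' := by intros; ext y p q; simp [add_mul]
      map_smul' := by intros; ext y p q; simp [smul_eq_mul]; ring }

noncomputable def kronG (F : Type*) [Field F] (n n' : ℕ) :
    (Fin n × Fin n' → Fin n × Fin n' → F) →ₗ[F]
      ((Fin n → Fin n → F) ⊗[F] (Fin n' → Fin n' → F)) :=
  ∑ p : Fin n × Fin n', ∑ q : Fin n × Fin n',
    ((LinearMap.proj q : (Fin n × Fin n' → F) →ₗ[F] F).comp
      (LinearMap.proj p : (Fin n × Fin n' → Fin n × Fin n' → F) →ₗ[F] (Fin n × Fin n' → F))).smulRight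
      ((stdE' F p.1 q.1) ⊗ₜ[F] (stdE' F p.2 q.2))

lemma kronF_tmul {F : Type*} [Field F] {n n' : ℕ} (x : Fin n → Fin n → F)
    (y : Fin n' → Fin n' → F) :
    kronF F n n' (x ⊗ₜ[F] y) = fun p q => x p.1 q.1 * y p.2 q.2 := by
  simp [kronF]

lemma kronF_kronG {F : Type*} [Field F] {n n' : ℕ}
    (z : Fin n × Fin n' → Fin n × Fin n' → F) :
    kronF F n n' (kronG F n n' z) = z := by
  funext p q
  simp only [kronG, LinearMap.sum_apply, LinearMap.smulRight_apply, LinearMap.comp_apply,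
    LinearMap.proj_apply, map_sum, map_smul, kronF_tmul]
  simp [stdE', Fintype.sum_prod_type, Finset.sum_apply, Pi.smul_apply, smul_eq_mul,
    ite_and, mul_ite, Finset.sum_ite_eq, Prod.ext_iff]

lemma kronF_bij {F : Type*} [Field F] {n n' : ℕ} :
    Function.Bijective (kronF F n n') := by
  have hsurj : Function.Surjective (kronF F n n') :=
    fun z => ⟨kronG F n n' z, kronF_kronG z⟩
  have hrank : Module.finrank F ((Fin n → Fin n → F) ⊗[F] (Fin n' → Fin n' → F))
      = Module.finrank F (Fin n × Fin n' → Fin n × Fin n' → F) := by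
    simp [Module.finrank_tensorProduct, Module.finrank_pi_fintype,
      Module.finrank_fintype_fun_eq_card]
    ring
  exact ⟨(LinearMap.injective_iff_surjective_of_finrank_eq_finrank hrank).mpr hsurj, hsurj⟩

/-- The skew matrix multiplication determined by a skew set `c`:
`(x * y) i l = ∑ j, c i j l * x i j * y j l`. -/
def skewMul {F : Type*} [Field F] {n : ℕ} (c : Fin n → Fin n → Fin n → F)
    (x y : Fin n → Fin n → F) : Fin n → Fin n → F :=
  fun i l => ∑ j, c i j l * x i j * y j l

/-- The matrix unit `e_{ij}`. -/
def stdE (F : Type*) [Field F] {n : ℕ} (i j : Fin n) : Fin n → Fin n → F :=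
  fun a b => if a = i ∧ b = j then 1 else 0

/-- The identity element `1 = e_11 + ⋯ + e_nn`. -/
def skewOne (F : Type*) [Field F] (n : ℕ) : Fin n → Fin n → F :=
  fun a b => if a = b then 1 else 0

/-- A skew set is reduced if `c_{iij} = c_{ijj} = 1`. -/
def IsReduced' {F : Type*} [Field F] {n : ℕ} (c : Fin n → Fin n → Fin n → F) : Prop :=
  ∀ i j : Fin n, c i i j = 1 ∧ c i j j = 1

/-- The left nucleus of the skew matrix algebra. -/
def lNuc {F : Type*} [Field F] {n : ℕ} (c : Fin n → Fin n → Fin n → F) :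
    Set (Fin n → Fin n → F) :=
  {x | ∀ y z, skewMul c (skewMul c x y) z = skewMul c x (skewMul c y z)}

/-- The middle nucleus of the skew matrix algebra. -/
def mNuc {F : Type*} [Field F] {n : ℕ} (c : Fin n → Fin n → Fin n → F) :
    Set (Fin n → Fin n → F) :=
  {x | ∀ y z, skewMul c (skewMul c y x) z = skewMul c y (skewMul c x z)}

/-- The right nucleus of the skew matrix algebra. -/
def rNuc {F : Type*} [Field F] {n : ℕ} (c : Fin n → Fin n → Fin n → F) :
    Set (Fin n → Fin n → F) :=
  {x | ∀ y z, skewMul c (skewMul c y z) x = skewMul c y (skewMul c z x)}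

/-- The nucleus of the skew matrix algebra. -/
def skewNuc {F : Type*} [Field F] {n : ℕ} (c : Fin n → Fin n → Fin n → F) :
    Set (Fin n → Fin n → F) :=
  lNuc c ∩ mNuc c ∩ rNuc c

/-- Skew matrix multiplication over an arbitrary finite index type. -/
def skewMulIdx {F : Type*} [Field F] {ι : Type*} [Fintype ι]
    (c : ι → ι → ι → F) (x y : ι → ι → F) : ι → ι → F :=
  fun i l => ∑ j, c i j l * x i j * y j l

/-- A skew set over an arbitrary index type is reduced if `c_{iij} = c_{ijj} = 1`. -/
def IsReducedIdx {F : Type*} [Field F] {ι : Type*} (c : ι → ι → ι → F) : Prop :=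
  ∀ i j : ι, c i i j = 1 ∧ c i j j = 1

/-- The tensor product of the skew sets `c` and `c'`. -/
def skewTensor {F : Type*} [Field F] {n n' : ℕ} (c : Fin n → Fin n → Fin n → F)
    (c' : Fin n' → Fin n' → Fin n' → F) :
    Fin n × Fin n' → Fin n × Fin n' → Fin n × Fin n' → F :=
  fun p q r => c p.1 q.1 r.1 * c' p.2 q.2 r.2

/-- The tensor product of the skew matrix algebras `M_n(F;c)` and `M_{n'}(F;c')` is
isomorphic to the skew matrix algebra `M_{nn'}(F; c ⊗ c')`, via the Kronecker map
`x ⊗ y ↦ ((i,i'),(j,j')) ↦ x i j * y i' j'`; moreover `c ⊗ c'` is again reduced. -/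
theorem stmt_11 {F : Type*} [Field F] {n n' : ℕ} (c : Fin n → Fin n → Fin n → F)
    (c' : Fin n' → Fin n' → Fin n' → F) (hc : IsReduced' c) (hc' : IsReduced' c') :
    IsReducedIdx (skewTensor c c') ∧
    ∃ T : ((Fin n → Fin n → F) ⊗[F] (Fin n' → Fin n' → F)) ≃ₗ[F]
        (Fin n × Fin n' → Fin n × Fin n' → F),
      (∀ x y, T (x ⊗ₜ[F] y) = fun p q => x p.1 q.1 * y p.2 q.2) ∧
      (∀ x x' y y', T ((skewMul c x x') ⊗ₜ[F] (skewMul c' y y'))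
          = skewMulIdx (skewTensor c c') (T (x ⊗ₜ[F] y)) (T (x' ⊗ₜ[F] y'))) := by
  constructor
  · intro p q
    exact ⟨by simp [skewTensor, (hc p.1 q.1).1, (hc' p.2 q.2).1],
      by simp [skewTensor, (hc p.1 q.1).2, (hc' p.2 q.2).2]⟩
  · refine ⟨LinearEquiv.ofBijective (kronF F n n') kronF_bij, fun x y => ?_, fun x x' y y' => ?_⟩
    · exact kronF_tmul x y
    · show kronF F n n' _ = skewMulIdx _ (kronF F n n' _) (kronF F n n' _)
      rw [kronF_tmul, kronF_tmul, kronF_tmul]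
      funext p q
      simp only [skewMul, skewMulIdx, skewTensor, Fintype.sum_prod_type]
      rw [Finset.sum_mul_sum]
      exact Finset.sum_congr rfl fun j _ => Finset.sum_congr rfl fun j' _ => by ring
end

section
/- In a skew matrix algebra A = M_n(F;c), a matrix unit e_{ij} belonging to the nucleus generates a nilpotent ideal of the nucleus if and only if c_{iji} = 0. -/
open scoped BigOperators TensorProduct

/-- The (left-bracketed) product of a list of elements of the skew matrix algebra. -/
def skewListProd {F : Type*} [Field F] {n : ℕ} (c : Fin n → Fin n → Fin n → F)
    (l : List (Fin n → Fin n → F)) : Fin n → Fin n → F :=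
  l.foldl (skewMul c) (skewOne F n)

section
variable {F : Type*} [Field F] {n : ℕ} (c : Fin n → Fin n → Fin n → F)

lemma Emul (a b : Fin n) (y : Fin n → Fin n → F) :
    skewMul c (stdE F a b) y = fun p q => if p = a then c a b q * y b q else 0 := by
  funext p q
  simp only [skewMul, stdE]
  rw [Finset.sum_eq_single b]
  · by_cases hp : p = a <;> simp [hp]
  · intro m _ hm; simp [hm]
  · simp

lemma mulE (a b : Fin n) (y : Fin n → Fin n → F) :
    skewMul c y (stdE F a b) = fun p q => if q = b then c p a b * y p a else 0 := by
  funext p q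
  simp only [skewMul, stdE]
  rw [Finset.sum_eq_single a]
  · by_cases hq : q = b <;> simp [hq, mul_comm]
  · intro m _ hm; simp [hm]
  · simp

lemma skewOne_mul (hc : IsReduced' c) (y : Fin n → Fin n → F) :
    skewMul c (skewOne F n) y = y := by
  funext p q
  simp only [skewMul, skewOne]
  rw [Finset.sum_eq_single p]
  · simp [(hc p q).1]
  · intro m _ hm; simp [hm.symm]
  · simp

lemma mul_skewOne (hc : IsReduced' c) (y : Fin n → Fin n → F) :
    skewMul c y (skewOne F n) = y := by
  funext p q
  simp only [skewMul, skewOne]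
  rw [Finset.sum_eq_single q]
  · simp [(hc p q).2]
  · intro m _ hm; simp [hm]
  · simp

lemma skewMul_zero_left (y : Fin n → Fin n → F) : skewMul c 0 y = 0 := by
  funext p q; simp [skewMul]

lemma skewMul_zero_right (y : Fin n → Fin n → F) : skewMul c y 0 = 0 := by
  funext p q; simp [skewMul]

lemma skewMul_add_left (x x' y : Fin n → Fin n → F) :
    skewMul c (x + x') y = skewMul c x y + skewMul c x' y := by
  funext p q
  simp only [skewMul, Pi.add_apply, ← Finset.sum_add_distrib]
  exact Finset.sum_congr rfl fun m _ => by ring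

lemma skewMul_add_right (x y y' : Fin n → Fin n → F) :
    skewMul c x (y + y') = skewMul c x y + skewMul c x y' := by
  funext p q
  simp only [skewMul, Pi.add_apply, ← Finset.sum_add_distrib]
  exact Finset.sum_congr rfl fun m _ => by ring

lemma skewMul_smul_left (s : F) (x y : Fin n → Fin n → F) :
    skewMul c (s • x) y = s • skewMul c x y := by
  funext p q
  simp only [skewMul, Pi.smul_apply, smul_eq_mul, Finset.mul_sum]
  exact Finset.sum_congr rfl fun m _ => by ring

lemma skewMul_smul_right (s : F) (x y : Fin n → Fin n → F) :
    skewMul c x (s • y) = s • skewMul c x y := by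
  funext p q
  simp only [skewMul, Pi.smul_apply, smul_eq_mul, Finset.mul_sum]
  exact Finset.sum_congr rfl fun m _ => by ring

end

section
variable {F : Type*} [Field F] {n : ℕ} (c : Fin n → Fin n → Fin n → F)

variable {c}

-- extraction of the scalar identities from e_{ij} being in the nucleus
lemma hL_of (i j : Fin n) (h : stdE F i j ∈ lNuc c) (l m : Fin n) :
    c i l m * c i j l = c i j m * c j l m := by
  have h1 := congrFun (congrFun (h (stdE F j l) (stdE F l m)) i) m
  simp only [Emul, mulE] at h1
  simpa [stdE] using h1

lemma hM_of (i j : Fin n) (h : stdE F i j ∈ mNuc c) (k m : Fin n) :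
    c k j m * c k i j = c k i m * c i j m := by
  have h1 := congrFun (congrFun (h (stdE F k i) (stdE F j m)) k) m
  simp only [Emul, mulE] at h1
  simpa [stdE] using h1

lemma hR_of (i j : Fin n) (h : stdE F i j ∈ rNuc c) (k l : Fin n) :
    c k i j * c k l i = c k l j * c l i j := by
  have h1 := congrFun (congrFun (h (stdE F k l) (stdE F l i)) k) j
  simp only [Emul, mulE] at h1
  simpa [stdE] using h1

lemma eji_mem (hc : IsReduced' c) (i j : Fin n) (hij : stdE F i j ∈ skewNuc c)
    (hlam : c i j i ≠ 0) : stdE F j i ∈ skewNuc c := by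
  have hL := hL_of i j hij.1.1
  have hM := hM_of i j hij.1.2
  have hR := hR_of i j hij.2
  have h1 : ∀ m, c i j m * c j i m = c i j i := fun m => by
    have h := hL i m
    rw [(hc i m).1, one_mul] at h
    exact h.symm
  have h2 : ∀ k, c k i j * c k j i = c i j i := fun k => by
    have h := hM k i
    rw [(hc k i).2, one_mul] at h
    rw [mul_comm]; exact h
  have hne1 : ∀ m, c i j m ≠ 0 := fun m h => hlam (by rw [← h1 m, h, zero_mul])
  have hne2 : ∀ k, c k i j ≠ 0 := fun k h => hlam (by rw [← h2 k, h, zero_mul])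
  have keyL : ∀ r q, c j r q * c j i r = c j i q * c i r q := fun r q => by
    apply mul_left_cancel₀ (mul_ne_zero (hne1 r) (hne1 q))
    linear_combination (c i j q * c j r q) * h1 r - (c i j r * c i r q) * h1 q
      - c i j i * hL r q
  have keyM : ∀ k q, c k i q * c k j i = c k j q * c j i q := fun k q => by
    apply mul_left_cancel₀ (mul_ne_zero (hne2 k) (hne1 q))
    linear_combination (c k i q * c i j q) * h2 k - (c k j q * c k i j) * h1 q
      - c i j i * hM k q
  have keyR : ∀ k l, c k j i * c k l j = c k l i * c l j i := fun k l => by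
    apply mul_left_cancel₀ (mul_ne_zero (hne2 k) (hne2 l))
    linear_combination (c k l j * c l i j) * h2 k - (c k l i * c k i j) * h2 l
      - c i j i * hR k l
  refine ⟨⟨?_, ?_⟩, ?_⟩
  · -- left nucleus
    intro y z
    funext p q
    rw [Emul c j i y, Emul c j i (skewMul c y z)]
    simp only [skewMul]
    by_cases hp : p = j
    · subst hp
      simp only [if_pos rfl, eq_self_iff_true, if_true, Finset.mul_sum]
      refine Finset.sum_congr rfl fun r _ => ?_
      linear_combination (y i r * z r q) * keyL r q
    · simp [hp]
  · -- middle nucleus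
    intro y z
    funext p q
    rw [mulE c j i y, Emul c j i z]
    simp only [skewMul]
    rw [Finset.sum_eq_single i (fun m _ hm => by simp [hm]) (by simp),
      Finset.sum_eq_single j (fun m _ hm => by simp [hm]) (by simp)]
    simp only [if_pos rfl, eq_self_iff_true, if_true]
    linear_combination (y p j * z i q) * keyM p q
  · -- right nucleus
    intro y z
    funext p q
    rw [mulE c j i (skewMul c y z), mulE c j i z]
    simp only [skewMul]
    by_cases hq : q = i
    · subst hq
      simp only [if_pos rfl, eq_self_iff_true, if_true, Finset.mul_sum]
      refine Finset.sum_congr rfl fun r _ => ?_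
      linear_combination (y p r * z r j) * keyR p r
    · simp [hq]

end

section
variable {F : Type*} [Field F] {n : ℕ} {c : Fin n → Fin n → Fin n → F}

lemma mNuc_mul {a b : Fin n → Fin n → F} (ha : a ∈ mNuc c) (hb : b ∈ mNuc c) :
    skewMul c a b ∈ mNuc c := by
  intro y z
  rw [← ha y b, hb (skewMul c y a) z, ha y (skewMul c b z), hb a z]

lemma exe_zero (h0 : c i j i = 0) (x : Fin n → Fin n → F) :
    skewMul c (skewMul c (stdE F i j) x) (stdE F i j) = 0 := by
  rw [mulE]
  funext p q
  simp only [Emul, Pi.zero_apply]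
  by_cases hq : q = j
  · by_cases hp : p = i <;> simp [hp, hq, h0]
  · simp [hq]

lemma gen_mul_gen (h0 : c i j i = 0) {a b a' b' : Fin n → Fin n → F}
    (ha : a ∈ skewNuc c) (hb : b ∈ skewNuc c) (ha' : a' ∈ skewNuc c) (hb' : b' ∈ skewNuc c) :
    skewMul c (skewMul c (skewMul c a (stdE F i j)) b)
      (skewMul c (skewMul c a' (stdE F i j)) b') = 0 := by
  set e := stdE F i j with he
  -- ((ae)b) g' = (ae)(b g')
  rw [hb.1.2 (skewMul c a e) (skewMul c (skewMul c a' e) b')]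
  -- b ((a'e) b') = (b (a'e)) b'
  rw [← hb.1.1 (skewMul c a' e) b']
  -- b (a'e) = (ba') e
  rw [← hb.1.1 a' e]
  -- (ae)(((ba')e) b') = ((ae)((ba')e)) b'
  rw [← hb'.2 (skewMul c a e) (skewMul c (skewMul c b a') e)]
  -- (ae)((ba')e) = a (e ((ba')e))
  rw [ha.1.1 e (skewMul c (skewMul c b a') e)]
  -- e ((ba')e) = (e(ba'))e = 0
  rw [← mNuc_mul hb.1.2 ha'.1.2 e e, exe_zero h0, skewMul_zero_right, skewMul_zero_left]

lemma span_mul_span (h0 : c i j i = 0)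
    {x y : Fin n → Fin n → F}
    (hx : x ∈ Submodule.span F
      {y : Fin n → Fin n → F | ∃ a ∈ skewNuc c, ∃ b ∈ skewNuc c,
        y = skewMul c (skewMul c a (stdE F i j)) b})
    (hy : y ∈ Submodule.span F
      {y : Fin n → Fin n → F | ∃ a ∈ skewNuc c, ∃ b ∈ skewNuc c,
        y = skewMul c (skewMul c a (stdE F i j)) b}) :
    skewMul c x y = 0 := by
  induction hx using Submodule.span_induction with
  | mem g hg =>
    obtain ⟨a, ha, b, hb, rfl⟩ := hg
    induction hy using Submodule.span_induction with
    | mem g' hg' =>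
      obtain ⟨a', ha', b', hb', rfl⟩ := hg'
      exact gen_mul_gen h0 ha hb ha' hb'
    | zero => exact skewMul_zero_right _ _
    | add u v _ _ hu hv => rw [skewMul_add_right, hu, hv, add_zero]
    | smul s u _ hu => rw [skewMul_smul_right, hu, smul_zero]
  | zero => exact skewMul_zero_left _ _
  | add u v _ _ hu hv => rw [skewMul_add_left, hu, hv, add_zero]
  | smul s u _ hu => rw [skewMul_smul_left, hu, smul_zero]

end

section
variable {F : Type*} [Field F] {n : ℕ} {c : Fin n → Fin n → Fin n → F}

lemma skewOne_mem (hc : IsReduced' c) : skewOne F n ∈ skewNuc c := by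
  refine ⟨⟨fun y z => ?_, fun y z => ?_⟩, fun y z => ?_⟩
  · rw [skewOne_mul c hc y, skewOne_mul c hc (skewMul c y z)]
  · rw [mul_skewOne c hc y, skewOne_mul c hc z]
  · rw [mul_skewOne c hc (skewMul c y z), mul_skewOne c hc z]

end


/-- A matrix unit `e_{ij}` belonging to the nucleus of `M_n(F;c)` generates a nilpotent
ideal of the nucleus if and only if `c_{iji} = 0`. -/
theorem stmt_17 {F : Type*} [Field F] {n : ℕ} (c : Fin n → Fin n → Fin n → F)
    (hc : IsReduced' c) (i j : Fin n) (hij : stdE F i j ∈ skewNuc c) :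
    (∃ m : ℕ, ∀ l : List (Fin n → Fin n → F), l.length = m + 1 →
        (∀ x ∈ l, x ∈ Submodule.span F
          {y : Fin n → Fin n → F | ∃ a ∈ skewNuc c, ∃ b ∈ skewNuc c,
            y = skewMul c (skewMul c a (stdE F i j)) b}) →
        skewListProd c l = 0)
      ↔ c i j i = 0 := by
  constructor
  · rintro ⟨m, hm⟩
    by_contra hlam
    have hji := eji_mem hc i j hij hlam
    set u : Fin n → Fin n → F := skewMul c (stdE F i j) (stdE F j i) with hu
    have huS : u ∈ {y : Fin n → Fin n → F | ∃ a ∈ skewNuc c, ∃ b ∈ skewNuc c,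
        y = skewMul c (skewMul c a (stdE F i j)) b} :=
      ⟨skewOne F n, skewOne_mem hc, stdE F j i, hji, by rw [skewOne_mul c hc]⟩
    have hu_eq : u = fun p q => if p = i ∧ q = i then c i j i else 0 := by
      rw [hu, Emul]
      funext p q
      by_cases hp : p = i <;> by_cases hq : q = i <;> simp [stdE, hp, hq]
    have huu : skewMul c u u = c i j i • u := by
      funext p q
      rw [hu_eq]
      simp only [skewMul, Pi.smul_apply, smul_eq_mul]
      rw [Finset.sum_eq_single i (fun m _ hm => by simp [hm]) (by simp)]
      by_cases hp : p = i <;> by_cases hq : q = i <;>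
        simp [hp, hq, (hc i i).1]
    have humul : ∀ s : F, skewMul c (s • u) u = (s * c i j i) • u := fun s => by
      rw [skewMul_smul_left, huu, smul_smul]
    have hfold : ∀ (k : ℕ) (s : F),
        List.foldl (skewMul c) (s • u) (List.replicate k u) = (s * (c i j i) ^ k) • u := by
      intro k
      induction k with
      | zero => intro s; simp
      | succ k ih =>
        intro s
        rw [List.replicate_succ, List.foldl_cons, humul s, ih (s * c i j i)]
        ring_nf
    have hprod : skewListProd c (List.replicate (m + 1) u) = (1 * (c i j i) ^ m) • u := by
      rw [List.replicate_succ]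
      show List.foldl (skewMul c) (skewOne F n) (u :: List.replicate m u)
        = (1 * (c i j i) ^ m) • u
      rw [List.foldl_cons, skewOne_mul c hc u]
      have h := hfold m 1
      rw [one_smul] at h
      exact h
    have hzero := hm (List.replicate (m + 1) u) (by simp)
      (fun x hx => by rw [List.eq_of_mem_replicate hx]; exact Submodule.subset_span huS)
    rw [hprod] at hzero
    have := congrFun (congrFun hzero i) i
    rw [hu_eq] at this
    simp only [Pi.smul_apply, smul_eq_mul, Pi.zero_apply, one_mul, and_self,
      eq_self_iff_true, if_true] at this
    exact (mul_ne_zero (pow_ne_zero m hlam) hlam) this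
  · intro h0
    refine ⟨1, fun l hl hmem => ?_⟩
    obtain ⟨x, y, rfl⟩ := List.length_eq_two.mp hl
    have hx := hmem x (by simp)
    have hy := hmem y (by simp)
    show skewListProd c [x, y] = 0
    simp only [skewListProd, List.foldl_cons, List.foldl_nil]
    rw [skewOne_mul c hc, span_mul_span h0 hx hy]
end
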